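/- Let c > 0 be fixed, let {x_n} ⊆ A, for each n let V_n be a subgradient tuple at x_n, and suppose that for every n the point x_{n+1} is a global minimiser of Q_c(·, x_n, V_n) over A. If h_0 is strongly convex with parameter μ > 0, then Φ_c(x_n) ≥ Φ_c(x_{n+1}) + (μ/2)‖x_{n+1} − x_n‖² for all n, and if in addition Φ_c is bounded below on A, then ‖x_{n+1} − x_n‖ → 0 as n → ∞. -/

import Mathlib

open RealInnerProductSpace Finset Filter Topology

noncomputable section

/-- Euclidean space `ℝ^d`. -/
abbrev Euc (d : ℕ) := EuclideanSpace ℝ (Fin d)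

/-- The (convex-analysis) subdifferential of `f` at `y`. -/
def subdiff {d : ℕ} (f : Euc d → ℝ) (y : Euc d) : Set (Euc d) :=
  {v | ∀ x, f y + ⟪v, x - y⟫ ≤ f x}

/-- The normal cone to `A` at `x`. -/
def normalCone {d : ℕ} (A : Set (Euc d)) (x : Euc d) : Set (Euc d) :=
  {v | ∀ y ∈ A, ⟪v, y - x⟫ ≤ 0}

/-- A subgradient tuple `V = (v₀, vᵢ (i ∈ I), vⱼ, wⱼ (j ∈ E))` at the point `y`:
`v_k ∈ ∂h_k(y)` for `k ∈ {0} ∪ I ∪ E` and `w_j ∈ ∂g_j(y)` for `j ∈ E`. -/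
structure SubgradTuple {d l p : ℕ} (h0 : Euc d → ℝ) (hI : Fin l → Euc d → ℝ)
    (gE hE : Fin p → Euc d → ℝ) (y : Euc d) : Type where
  v0 : Euc d
  vI : Fin l → Euc d
  vE : Fin p → Euc d
  wE : Fin p → Euc d
  v0_mem : v0 ∈ subdiff h0 y
  vI_mem : ∀ i, vI i ∈ subdiff (hI i) y
  vE_mem : ∀ j, vE j ∈ subdiff (hE j) y
  wE_mem : ∀ j, wE j ∈ subdiff (gE j) y

variable {d l p : ℕ}

/-- The linearised infeasibility measure `Γ(x, y, V)`. -/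
def Gam (gI : Fin l → Euc d → ℝ) {h0 : Euc d → ℝ} {hI : Fin l → Euc d → ℝ}
    {gE hE : Fin p → Euc d → ℝ} {y : Euc d}
    (V : SubgradTuple h0 hI gE hE y) (x : Euc d) : ℝ :=
  (∑ i, max (gI i x - hI i y - ⟪V.vI i, x - y⟫) 0)
  + ∑ j, max (gE j x - hE j y - ⟪V.vE j, x - y⟫)
      (hE j x - gE j y - ⟪V.wE j, x - y⟫)

/-- The convex majorant `Q_c(x, y, V)` of the penalty function. -/
def Qfun (g0 : Euc d → ℝ) (gI : Fin l → Euc d → ℝ) {h0 : Euc d → ℝ}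
    {hI : Fin l → Euc d → ℝ} {gE hE : Fin p → Euc d → ℝ} {y : Euc d}
    (V : SubgradTuple h0 hI gE hE y) (c : ℝ) (x : Euc d) : ℝ :=
  g0 x - ⟪V.v0, x - y⟫ + c * Gam gI V x

/-- The ℓ1 penalty term `φ`. -/
def phi (gI hI : Fin l → Euc d → ℝ) (gE hE : Fin p → Euc d → ℝ) (x : Euc d) : ℝ :=
  (∑ i, max (gI i x - hI i x) 0) + ∑ j, |gE j x - hE j x|

/-- The ℓ1 penalty function `Φ_c = f₀ + c φ`. -/
def Phi (g0 h0 : Euc d → ℝ) (gI hI : Fin l → Euc d → ℝ) (gE hE : Fin p → Euc d → ℝ)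
    (c : ℝ) (x : Euc d) : ℝ :=
  (g0 x - h0 x) + c * phi gI hI gE hE x

/-- Feasibility for the problem (P). -/
def Feasible (A : Set (Euc d)) (gI hI : Fin l → Euc d → ℝ)
    (gE hE : Fin p → Euc d → ℝ) (x : Euc d) : Prop :=
  x ∈ A ∧ (∀ i, gI i x - hI i x ≤ 0) ∧ (∀ j, gE j x - hE j x = 0)

/-- Criticality for the problem (P) (Definition 1). -/
def IsCritical (A : Set (Euc d)) (g0 h0 : Euc d → ℝ) (gI hI : Fin l → Euc d → ℝ)
    (gE hE : Fin p → Euc d → ℝ) (x : Euc d) : Prop :=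
  ∃ V : SubgradTuple h0 hI gE hE x, ∃ lam : Fin l → ℝ, ∃ mu1 mu2 : Fin p → ℝ,
    (∀ i, 0 ≤ lam i) ∧ (∀ j, 0 ≤ mu1 j) ∧ (∀ j, 0 ≤ mu2 j) ∧
    (∀ i, lam i * (gI i x - hI i x) = 0) ∧
    ∃ u0 ∈ subdiff g0 x, ∃ uI : Fin l → Euc d, (∀ i, uI i ∈ subdiff (gI i) x) ∧
    ∃ uE : Fin p → Euc d, (∀ j, uE j ∈ subdiff (gE j) x) ∧
    ∃ zE : Fin p → Euc d, (∀ j, zE j ∈ subdiff (hE j) x) ∧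
    ∃ ν ∈ normalCone A x,
      (0 : Euc d) = (u0 - V.v0) + (∑ i, lam i • (uI i - V.vI i))
        + (∑ j, mu1 j • (uE j - V.vE j)) - (∑ j, mu2 j • (V.wE j - zE j)) + ν

/-- Generalised criticality for the penalty parameter `c`. -/
def IsGenCritical (A : Set (Euc d)) (g0 h0 : Euc d → ℝ) (gI hI : Fin l → Euc d → ℝ)
    (gE hE : Fin p → Euc d → ℝ) (c : ℝ) (x : Euc d) : Prop :=
  x ∈ A ∧ ∃ V : SubgradTuple h0 hI gE hE x, ∀ z ∈ A, Qfun g0 gI V c x ≤ Qfun g0 gI V c z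

/-- Criticality for the penalty term `φ`. -/
def IsCriticalPen (A : Set (Euc d)) (h0 : Euc d → ℝ) (gI hI : Fin l → Euc d → ℝ)
    (gE hE : Fin p → Euc d → ℝ) (x : Euc d) : Prop :=
  x ∈ A ∧ ∃ V : SubgradTuple h0 hI gE hE x, ∀ z ∈ A, Gam gI V x ≤ Gam gI V z

/-- `F` is coercive on `A`. -/
def CoerciveOn {d : ℕ} (F : Euc d → ℝ) (A : Set (Euc d)) : Prop :=
  ∀ u : ℕ → Euc d, (∀ n, u n ∈ A) → Tendsto (fun n => ‖u n‖) atTop atTop →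
    Tendsto (fun n => F (u n)) atTop atTop

/-! The model `Q_c(·, y, V)` linearises each concave part `-h_k` at `y`, so it dominates
`Φ_c + h₀(y)` and touches it at `y`; strong convexity of `h₀` adds `(μ/2)‖x - y‖²` to that gap.
Minimising the model over `A` from `y = x_n` therefore decreases `Φ_c` by at least
`(μ/2)‖x_{n+1} - x_n‖²`, and a decreasing sequence bounded below has vanishing decrements. -/

lemma tendsto_zero_of_add_le_of_bddBelow {a b : ℕ → ℝ} (hb : ∀ n, 0 ≤ b n)
    (hab : ∀ n, a (n + 1) + b n ≤ a n) (ha : BddBelow (Set.range a)) :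
    Tendsto b atTop (𝓝 0) := by
  have hanti : Antitone a := antitone_nat_of_succ_le fun n => by linarith [hab n, hb n]
  have hlim := tendsto_atTop_ciInf hanti ha
  have hgap : Tendsto (fun n => a n - a (n + 1)) atTop (𝓝 0) := by
    simpa using hlim.sub (hlim.comp (tendsto_add_atTop_nat 1))
  exact squeeze_zero hb (fun n => by linarith [hab n]) hgap

lemma tendsto_zero_of_const_mul_sq {f : ℕ → ℝ} {κ : ℝ} (hκ : 0 < κ) (hf : ∀ n, 0 ≤ f n)
    (h : Tendsto (fun n => κ * f n ^ 2) atTop (𝓝 0)) : Tendsto f atTop (𝓝 0) := by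
  have hsqrt := (h.const_mul κ⁻¹).sqrt
  rw [mul_zero, Real.sqrt_zero] at hsqrt
  refine hsqrt.congr fun n => ?_
  rw [inv_mul_cancel_left₀ hκ.ne', Real.sqrt_sq (hf n)]

section Model

variable (g0 : Euc d → ℝ) {h0 : Euc d → ℝ} (gI : Fin l → Euc d → ℝ) {hI : Fin l → Euc d → ℝ}
  {gE hE : Fin p → Euc d → ℝ} {y : Euc d} (V : SubgradTuple h0 hI gE hE y)

lemma phi_le_Gam (x : Euc d) : phi gI hI gE hE x ≤ Gam gI V x := by
  unfold phi Gam
  refine add_le_add (Finset.sum_le_sum fun i _ => ?_) (Finset.sum_le_sum fun j _ => ?_)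
  · have := V.vI_mem i x
    exact max_le_max (by linarith) le_rfl
  · have := V.vE_mem j x
    have := V.wE_mem j x
    rw [abs_eq_max_neg, neg_sub]
    exact max_le_max (by linarith) (by linarith)

lemma Gam_self : Gam gI V y = phi gI hI gE hE y := by
  unfold phi Gam
  congr 1
  · refine Finset.sum_congr rfl fun i _ => ?_
    simp
  · refine Finset.sum_congr rfl fun j _ => ?_
    rw [abs_eq_max_neg, neg_sub]
    simp

lemma Qfun_self (c : ℝ) :
    Qfun g0 gI V c y = Phi g0 h0 gI hI gE hE c y + h0 y := by
  rw [Qfun, Phi, Gam_self, sub_self, inner_zero_right]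
  ring

lemma Phi_add_le_Qfun_sub {μ : ℝ}
    (hstrong : ∀ z, h0 y + ⟪V.v0, z - y⟫ + μ / 2 * ‖z - y‖ ^ 2 ≤ h0 z)
    {c : ℝ} (hc : 0 ≤ c) (x : Euc d) :
    Phi g0 h0 gI hI gE hE c x + μ / 2 * ‖x - y‖ ^ 2 ≤ Qfun g0 gI V c x - h0 y := by
  have hmaj := mul_le_mul_of_nonneg_left (phi_le_Gam gI V x) hc
  rw [Phi, Qfun]
  linarith [hstrong x]

lemma Phi_add_le_of_isMinOn_Qfun {μ : ℝ}
    (hstrong : ∀ z, h0 y + ⟪V.v0, z - y⟫ + μ / 2 * ‖z - y‖ ^ 2 ≤ h0 z)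
    {c : ℝ} (hc : 0 ≤ c) {A : Set (Euc d)} (hy : y ∈ A) {x : Euc d}
    (hx : IsMinOn (Qfun g0 gI V c) A x) :
    Phi g0 h0 gI hI gE hE c x + μ / 2 * ‖x - y‖ ^ 2 ≤ Phi g0 h0 gI hI gE hE c y := by
  have hmin := isMinOn_iff.1 hx y hy
  rw [Qfun_self] at hmin
  linarith [Phi_add_le_Qfun_sub g0 gI V hstrong hc x]

end Model

theorem stmt14_general {d l p : ℕ} (A : Set (Euc d)) (g0 h0 : Euc d → ℝ)
    (gI hI : Fin l → Euc d → ℝ) (gE hE : Fin p → Euc d → ℝ)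
    (c : ℝ) (hc : 0 < c)
    (x : ℕ → Euc d) (hxA : ∀ n, x n ∈ A)
    (V : (n : ℕ) → SubgradTuple h0 hI gE hE (x n))
    (hmin : ∀ n, ∀ z ∈ A, Qfun g0 gI (V n) c (x (n + 1)) ≤ Qfun g0 gI (V n) c z)
    (μ : ℝ) (hμ : 0 < μ)
    (hstrong : ∀ z w : Euc d, ∀ v ∈ subdiff h0 w,
      h0 w + ⟪v, z - w⟫ + μ / 2 * ‖z - w‖ ^ 2 ≤ h0 z) :
    (∀ n, Phi g0 h0 gI hI gE hE c (x (n + 1)) + μ / 2 * ‖x (n + 1) - x n‖ ^ 2 ≤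
        Phi g0 h0 gI hI gE hE c (x n)) ∧
    ((∃ M : ℝ, ∀ z ∈ A, M ≤ Phi g0 h0 gI hI gE hE c z) →
      Tendsto (fun n => ‖x (n + 1) - x n‖) atTop (𝓝 0)) := by
  have descent : ∀ n, Phi g0 h0 gI hI gE hE c (x (n + 1)) + μ / 2 * ‖x (n + 1) - x n‖ ^ 2 ≤
      Phi g0 h0 gI hI gE hE c (x n) := fun n =>
    Phi_add_le_of_isMinOn_Qfun g0 gI (V n) (fun z => hstrong z (x n) _ (V n).v0_mem) hc.le
      (hxA n) (isMinOn_iff.2 (hmin n))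
  refine ⟨descent, fun ⟨M, hM⟩ => ?_⟩
  have hbdd : BddBelow (Set.range fun n => Phi g0 h0 gI hI gE hE c (x n)) :=
    ⟨M, by rintro _ ⟨n, rfl⟩; exact hM _ (hxA n)⟩
  refine tendsto_zero_of_const_mul_sq (half_pos hμ) (fun n => norm_nonneg _) ?_
  exact tendsto_zero_of_add_le_of_bddBelow (fun n => by positivity) descent hbdd

theorem stmt14 {d l p : ℕ} (A : Set (Euc d)) (g0 h0 : Euc d → ℝ)
    (gI hI : Fin l → Euc d → ℝ) (gE hE : Fin p → Euc d → ℝ)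
    (hA : Convex ℝ A) (hAcl : IsClosed A) (hAne : A.Nonempty)
    (hg0 : ConvexOn ℝ Set.univ g0) (hh0 : ConvexOn ℝ Set.univ h0)
    (hgI : ∀ i, ConvexOn ℝ Set.univ (gI i)) (hhI : ∀ i, ConvexOn ℝ Set.univ (hI i))
    (hgE : ∀ j, ConvexOn ℝ Set.univ (gE j)) (hhE : ∀ j, ConvexOn ℝ Set.univ (hE j))
    (c : ℝ) (hc : 0 < c)
    (x : ℕ → Euc d) (hxA : ∀ n, x n ∈ A)
    (V : (n : ℕ) → SubgradTuple h0 hI gE hE (x n))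
    (hmin : ∀ n, ∀ z ∈ A, Qfun g0 gI (V n) c (x (n + 1)) ≤ Qfun g0 gI (V n) c z)
    (μ : ℝ) (hμ : 0 < μ)
    (hstrong : ∀ z w : Euc d, ∀ v ∈ subdiff h0 w,
      h0 w + ⟪v, z - w⟫ + μ / 2 * ‖z - w‖ ^ 2 ≤ h0 z) :
    (∀ n, Phi g0 h0 gI hI gE hE c (x (n + 1)) + μ / 2 * ‖x (n + 1) - x n‖ ^ 2 ≤
        Phi g0 h0 gI hI gE hE c (x n)) ∧
    ((∃ M : ℝ, ∀ z ∈ A, M ≤ Phi g0 h0 gI hI gE hE c z) →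
      Tendsto (fun n => ‖x (n + 1) - x n‖) atTop (𝓝 0)) :=
  stmt14_general A g0 h0 gI hI gE hE c hc x hxA V hmin μ hμ hstrong
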